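/- Let F be a real polynomial of degree less than N with coefficients F_0, …, F_{N−1}, for r ≥ 0 let β*_r F denote the remainder on dividing ∑_{k=0}^{N−1} β_{r,k}·F_k·X^{k+r} by A(X) = X^N + 2^{−b} X − 1, and let z ∈ ℂ satisfy A(z) = 0. Then the series ∑_{r=0}^∞ (β*_r F)(z) converges and equals F(β(z)) = ∑_{k=0}^{N−1} F_k·β(z)^k, where β(z) := z·(1 − 2^{−b} z)^{−1/N} is defined using the principal branch of the complex power. -/

import Mathlib

/-!
Since `A(z) = 0`, evaluating a remainder modulo `A` at `z` is the same as evaluating the dividend,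
so the `r`-th term is `∑_k F_k β_{r,k} z^(k+r)`. For fixed `k` these are the terms of the binomial
series of `z^k (1 - 2^(-b) z)^(-k/N) = β(z)^k`, which converges because every root of `A`
satisfies `|2^(-b) z| < 1`.
-/

open Polynomial

/-- Generalized binomial coefficient `C(x, r) = x (x-1) ⋯ (x-r+1) / r!`. -/
noncomputable def gbc (x : ℝ) (r : ℕ) : ℝ :=
  (∏ j ∈ Finset.range r, (x - j)) / (r.factorial : ℝ)

/-- `β_{r,k} = C(-k/N, r) (-2^(-b))^r`. -/
noncomputable def betaC (b N r k : ℕ) : ℝ :=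
  gbc (-(k : ℝ) / N) r * (-(2:ℝ) ^ (-(b:ℤ))) ^ r

/-- The polynomial `A(X) = X^N + 2^(-b) X - 1` over `ℝ`. -/
noncomputable def Apoly (b N : ℕ) : Polynomial ℝ :=
  X ^ N + C ((2:ℝ) ^ (-(b:ℤ))) * X - 1

/-- `β*_r F`: the remainder of `∑_{k<N} β_{r,k} F_k X^(k+r)` modulo `A(X)`. -/
noncomputable def bstar (b N r : ℕ) (F : Polynomial ℝ) : Polynomial ℝ :=
  (∑ k ∈ Finset.range N, C (betaC b N r k * F.coeff k) * X ^ (k + r)) %ₘ Apoly b N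

/-- The function `β(z) = z (1 - 2^(-b) z)^(-1/N)` (principal branch). -/
noncomputable def betaF (b N : ℕ) (z : ℂ) : ℂ :=
  z * (1 - (2:ℂ) ^ (-(b:ℤ)) * z) ^ (-1 / (N:ℂ))

open Finset

theorem descPochhammer_smeval_eq_prod_range {R : Type*} [CommRing R] (a : R) (n : ℕ) :
    (descPochhammer ℤ n).smeval a = ∏ j ∈ range n, (a - j) := by
  rw [← aeval_eq_smeval, aeval_def, ← eval_map, descPochhammer_map,
    descPochhammer_eval_eq_prod_range]

theorem ofReal_gbc (x : ℝ) (r : ℕ) : (gbc x r : ℂ) = Ring.choose (x : ℂ) r := by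
  rw [Ring.choose_eq_smul, descPochhammer_smeval_eq_prod_range, gbc, smul_eq_mul]
  push_cast
  ring

theorem Complex.hasSum_choose_mul_pow (a : ℂ) {w : ℂ} (hw : ‖w‖ < 1) :
    HasSum (fun n ↦ Ring.choose a n * w ^ n) ((1 + w) ^ a) := by
  have hw' : w ∈ Metric.eball (0 : ℂ) 1 := by
    rwa [Metric.mem_eball, edist_zero_right, ← ofReal_norm, ENNReal.ofReal_lt_one]
  simpa [binomialSeries, FormalMultilinearSeries.coeff_ofScalars, mul_comm] using
    (Complex.one_add_cpow_hasFPowerSeriesOnBall_zero (a := a)).hasSum hw'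

theorem norm_mul_lt_one_of_pow_add_mul_eq_one {c z : ℂ} {N : ℕ} (hc : ‖c‖ < 1 / 2)
    (hz : z ^ N + c * z = 1) : ‖c * z‖ < 1 := by
  rcases N.eq_zero_or_pos with rfl | hN
  · simp [(add_eq_left.mp hz : c * z = 0)]
  by_contra! h
  rw [norm_mul] at h
  have hz2 : 2 < ‖z‖ := by nlinarith [norm_nonneg c, norm_nonneg z]
  have : ‖z‖ ≤ 1 + ‖c‖ * ‖z‖ := calc
    ‖z‖ ≤ ‖z‖ ^ N := le_self_pow₀ (by linarith) hN.ne'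
    _ = ‖1 - c * z‖ := by rw [← norm_pow, ← hz, add_sub_cancel_right]
    _ ≤ 1 + ‖c‖ * ‖z‖ := by simpa [norm_mul] using norm_sub_le (1 : ℂ) (c * z)
  nlinarith [norm_nonneg c]

theorem aeval_bstar {b N : ℕ} {z : ℂ} (hz : z ^ N + (2:ℂ) ^ (-(b:ℤ)) * z - 1 = 0) (r : ℕ)
    (F : ℝ[X]) :
    aeval z (bstar b N r F) = ∑ k ∈ range N, (betaC b N r k * F.coeff k : ℂ) * z ^ (k + r) := by
  have hA : aeval z (Apoly b N) = 0 := by simpa [Apoly] using hz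
  simp [bstar, aeval_modByMonic_eq_self_of_root hA]

theorem hasSum_betaC_mul_pow {b N : ℕ} {z : ℂ} (hcz : ‖(2:ℂ) ^ (-(b:ℤ)) * z‖ < 1) (k : ℕ) :
    HasSum (fun r ↦ (betaC b N r k : ℂ) * z ^ (k + r)) (betaF b N z ^ k) := by
  have hw : ‖-(2:ℂ) ^ (-(b:ℤ)) * z‖ < 1 := by rwa [neg_mul, norm_neg]
  have hk : betaF b N z ^ k = z ^ k * (1 + -(2:ℂ) ^ (-(b:ℤ)) * z) ^ (-(k:ℂ) / N) := by
    rw [betaF, mul_pow, ← Complex.cpow_nat_mul, neg_mul, ← sub_eq_add_neg]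
    ring_nf
  rw [hk]
  refine ((Complex.hasSum_choose_mul_pow _ hw).mul_left (z ^ k)).congr_fun fun r ↦ ?_
  rw [betaC, Complex.ofReal_mul, ofReal_gbc]
  push_cast
  ring

theorem bstar_evaluation_general (b N : ℕ) (hb : 4 ≤ b)
    (F : Polynomial ℝ)
    (z : ℂ) (hz : z ^ N + (2:ℂ) ^ (-(b:ℤ)) * z - 1 = 0) :
    HasSum (fun r : ℕ => Polynomial.aeval z (bstar b N r F))
      (∑ k ∈ Finset.range N, (F.coeff k : ℂ) * (betaF b N z) ^ k) := by
  have hc : ‖(2:ℂ) ^ (-(b:ℤ))‖ < 1 / 2 := by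
    rw [norm_zpow, Complex.norm_ofNat, zpow_neg, zpow_natCast, one_div]
    exact inv_strictAnti₀ two_pos (lt_of_lt_of_le (by norm_num) (pow_le_pow_right₀ one_le_two hb))
  have hcz := norm_mul_lt_one_of_pow_add_mul_eq_one (z := z) hc (by linear_combination hz)
  simp_rw [aeval_bstar hz]
  exact hasSum_sum fun k _ ↦
    ((hasSum_betaC_mul_pow hcz k).mul_left _).congr_fun fun r ↦ by ring

/-- if `z` is a (complex) root of `A(X) = X^N + 2^(-b) X - 1`, then
`∑_r (β*_r F)(z)` converges to `F(β(z)) = ∑_{k<N} F_k β(z)^k`. -/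
theorem bstar_evaluation (b N : ℕ) (hb : 4 ≤ b) (hN : 3 ≤ N)
    (F : Polynomial ℝ) (hF : F.natDegree < N)
    (z : ℂ) (hz : z ^ N + (2:ℂ) ^ (-(b:ℤ)) * z - 1 = 0) :
    HasSum (fun r : ℕ => Polynomial.aeval z (bstar b N r F))
      (∑ k ∈ Finset.range N, (F.coeff k : ℂ) * (betaF b N z) ^ k) :=
  bstar_evaluation_general b N hb F z hz
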